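/- arXiv:2007.07433 — 5 statements merged into one kernel-verified Lean document; each statement's English description precedes it below -/
import Mathlib

section
/- For X positive semidefinite and x ∈ ℝⁿ, x lies in the range of X if and only if there exists ε > 0 such that X − ε·xxᵀ is positive semidefinite. -/
/-!
If `x = X y`, Cauchy–Schwarz for the semi-inner product `⟨u, v⟩ = uᵀ X v` gives
`(xᵀ z)² = ⟨y, z⟩² ≤ (yᵀ X y) (zᵀ X z)`, so `X - ε xxᵀ ⪰ 0` for `ε = 1 / (1 + yᵀ X y)`.
Conversely, testing `X - ε xxᵀ ⪰ 0` on `z ∈ ker X` gives `-ε (xᵀ z)² ≥ 0`, so `x ⊥ ker X`,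
and for symmetric `X` the orthogonal complement of the kernel is the range.
-/

open Matrix Set

noncomputable section

/-- The set of rank-one (outer product) matrices `x xᵀ`. -/
def RankOneSet (n : ℕ) : Set (Matrix (Fin n) (Fin n) ℝ) :=
  {X | ∃ x : Fin n → ℝ, X = vecMulVec x x}

/-- A set of PSD matrices is rank-one generated if it equals the convex hull of its
rank-one members. -/
def IsROG {n : ℕ} (S : Set (Matrix (Fin n) (Fin n) ℝ)) : Prop :=
  S = convexHull ℝ (S ∩ RankOneSet n)

/-- `ℝ₊X` is an extreme ray of `S`: `X ∈ S`, `X ≠ 0`, and whenever `X = (Y+Z)/2` with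
`Y, Z ∈ S`, both `Y` and `Z` lie on the ray `ℝ₊X`. -/
def IsExtremeRay' {n : ℕ} (S : Set (Matrix (Fin n) (Fin n) ℝ))
    (X : Matrix (Fin n) (Fin n) ℝ) : Prop :=
  X ∈ S ∧ X ≠ 0 ∧ ∀ Y ∈ S, ∀ Z ∈ S, X = (1/2 : ℝ) • (Y + Z) →
    (∃ α : ℝ, 0 ≤ α ∧ Y = α • X) ∧ (∃ β : ℝ, 0 ≤ β ∧ Z = β • X)

/-- `S(𝓜) = {X ⪰ 0 : ⟨N, X⟩ ≥ 0 ∀ N ∈ 𝓜}` with the trace inner product. -/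
def SCone {n : ℕ} (𝓜 : Set (Matrix (Fin n) (Fin n) ℝ)) : Set (Matrix (Fin n) (Fin n) ℝ) :=
  {X | X.PosSemidef ∧ ∀ N ∈ 𝓜, 0 ≤ (N * X).trace}

/-- `T(𝓜) = {X ⪰ 0 : ⟨N, X⟩ = 0 ∀ N ∈ 𝓜}` with the trace inner product. -/
def TCone {n : ℕ} (𝓜 : Set (Matrix (Fin n) (Fin n) ℝ)) : Set (Matrix (Fin n) (Fin n) ℝ) :=
  {X | X.PosSemidef ∧ ∀ N ∈ 𝓜, (N * X).trace = 0}

namespace Matrix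

variable {ι : Type*} [Fintype ι]

theorem IsHermitian.exists_mulVec_eq_iff {𝕜 : Type*} [RCLike 𝕜] [DecidableEq ι]
    {A : Matrix ι ι 𝕜} (hA : A.IsHermitian) (x : ι → 𝕜) :
    (∃ y, A *ᵥ y = x) ↔ ∀ z, A *ᵥ z = 0 → x ⬝ᵥ star z = 0 := by
  have hT : (toEuclideanLin A).range = (toEuclideanLin A).kerᗮ := by
    rw [LinearMap.orthogonal_ker, (isSymmetric_toEuclideanLin_iff.mpr hA).adjoint_eq]
  simpa [Submodule.mem_orthogonal, (WithLp.toLp_surjective 2).forall,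
    (WithLp.toLp_surjective 2).exists, toLpLin_toLp, EuclideanSpace.inner_toLp_toLp,
    (WithLp.toLp_injective 2).eq_iff] using congrArg (WithLp.toLp 2 x ∈ ·) hT

theorem dotProduct_sub_smul_vecMulVec_mulVec (A : Matrix ι ι ℝ) (ε : ℝ) (x z : ι → ℝ) :
    z ⬝ᵥ (A - ε • vecMulVec x x) *ᵥ z = z ⬝ᵥ A *ᵥ z - ε * (x ⬝ᵥ z) ^ 2 := by
  simp only [sub_mulVec, smul_mulVec, vecMulVec_mulVec, dotProduct_sub, dotProduct_smul,
    op_smul_eq_smul, smul_eq_mul, dotProduct_comm z x]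
  ring

namespace PosSemidef

theorem mulVec_dotProduct_sq_le {A : Matrix ι ι ℝ} (hA : A.PosSemidef) (y z : ι → ℝ) :
    (A *ᵥ y ⬝ᵥ z) ^ 2 ≤ (y ⬝ᵥ A *ᵥ y) * (z ⬝ᵥ A *ᵥ z) := by
  classical
  have hAT : Aᵀ = A := by simpa using hA.isHermitian.eq
  have hsymm : y ⬝ᵥ A *ᵥ z = A *ᵥ y ⬝ᵥ z := by
    rw [dotProduct_mulVec, ← mulVec_transpose, hAT, dotProduct_comm]
  have := LinearMap.BilinForm.apply_mul_apply_le_of_forall_zero_le (toLinearMap₂' ℝ A)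
    (fun v ↦ by simpa [toLinearMap₂'_apply'] using hA.dotProduct_mulVec_nonneg v) y z
  simp only [toLinearMap₂'_apply'] at this
  rwa [hsymm, dotProduct_comm z, ← sq] at this

theorem sub_smul_vecMulVec_mulVec {A : Matrix ι ι ℝ} (hA : A.PosSemidef) (y : ι → ℝ) :
    (A - (1 + y ⬝ᵥ A *ᵥ y)⁻¹ • vecMulVec (A *ᵥ y) (A *ᵥ y)).PosSemidef := by
  set c := y ⬝ᵥ A *ᵥ y
  have hc : 0 ≤ c := by simpa using hA.dotProduct_mulVec_nonneg y
  have hHerm : (vecMulVec (A *ᵥ y) (A *ᵥ y)).IsHermitian := by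
    simpa using (posSemidef_vecMulVec_self_star (A *ᵥ y)).isHermitian
  refine .of_dotProduct_mulVec_nonneg (hA.isHermitian.sub (hHerm.smul (.all _))) fun z ↦ ?_
  have hz : 0 ≤ z ⬝ᵥ A *ᵥ z := by simpa using hA.dotProduct_mulVec_nonneg z
  have hcs := hA.mulVec_dotProduct_sq_le y z
  rw [star_trivial, dotProduct_sub_smul_vecMulVec_mulVec, sub_nonneg,
    inv_mul_le_iff₀ (by positivity)]
  nlinarith

theorem dotProduct_eq_zero_of_sub_smul_vecMulVec {A : Matrix ι ι ℝ} {ε : ℝ} {x : ι → ℝ}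
    (h : (A - ε • vecMulVec x x).PosSemidef) (hε : 0 < ε) {z : ι → ℝ} (hz : A *ᵥ z = 0) :
    x ⬝ᵥ z = 0 := by
  have := h.dotProduct_mulVec_nonneg z
  rw [star_trivial, dotProduct_sub_smul_vecMulVec_mulVec, hz, dotProduct_zero, zero_sub,
    neg_nonneg] at this
  exact pow_eq_zero_iff two_ne_zero |>.mp <|
    le_antisymm (nonpos_of_mul_nonpos_right this hε) (sq_nonneg _)

end PosSemidef

end Matrix

theorem stmt_1 {n : ℕ} (X : Matrix (Fin n) (Fin n) ℝ) (hX : X.PosSemidef) (x : Fin n → ℝ) :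
    (∃ y : Fin n → ℝ, X.mulVec y = x) ↔
      ∃ ε : ℝ, 0 < ε ∧ (X - ε • vecMulVec x x).PosSemidef := by
  constructor
  · rintro ⟨y, rfl⟩
    exact ⟨_, by positivity [hX.dotProduct_mulVec_nonneg y], hX.sub_smul_vecMulVec_mulVec y⟩
  · rintro ⟨ε, hε, hPSD⟩
    refine (hX.isHermitian.exists_mulVec_eq_iff x).mpr fun z hz ↦ ?_
    simpa using hPSD.dotProduct_eq_zero_of_sub_smul_vecMulVec hε hz
end
end

section
/- Let M ⊆ S^n, let ℝ₊X be an extreme ray of S(M), and let M' ⊆ M contain all constraints tight at X (i.e., {M ∈ M : ⟨M,X⟩ = 0} ⊆ M'). If M \ M' is compact, then ℝ₊X is an extreme ray of S(M'). If moreover M' = {M ∈ M : ⟨M,X⟩ = 0}, then ℝ₊X is an extreme ray of T(M') = {X ⪰ 0 : ⟨M,X⟩ = 0 ∀M ∈ M'}. -/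
open Matrix Set

noncomputable section

open Filter Topology

/-!
The constraints of `𝓜 \ 𝓜'` are strictly positive at `X` and form a compact set, so by the tube
lemma a short enough step from `X` towards any `W ∈ S(𝓜')` lands in `S(𝓜)`. If `X = (Y + Z)/2`
in `S(𝓜')`, the same short step towards `Y` and towards `Z` yields a decomposition of `X` inside
`S(𝓜)`; extremality there puts both steps on `ℝ₊X`, hence `Y` and `Z` too, with nonnegative
coefficients because everything is PSD. For `T(𝓜') ⊆ S(𝓜')` extremality is inherited.
-/

lemma eq_smul_of_lineMap_eq_smul {K V : Type*} [Field K] [AddCommGroup V] [Module K V]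
    {X W : V} {t α : K} (ht : t ≠ 0) (h : (1 - t) • X + t • W = α • X) :
    W = ((α - 1 + t) / t) • X := by
  have htW : t • W = (α - 1 + t) • X := by
    rw [← sub_eq_iff_eq_add'.mpr h.symm]; module
  rw [div_eq_inv_mul, mul_smul, ← htW, smul_smul, inv_mul_cancel₀ ht, one_smul]

lemma Matrix.PosSemidef.nonneg_of_eq_smul {m : Type*} [Fintype m] {W X : Matrix m m ℝ} {c : ℝ}
    (hW : W.PosSemidef) (hX : X.PosSemidef) (hX0 : X ≠ 0) (h : W = c • X) : 0 ≤ c := by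
  have hXtr : 0 < X.trace :=
    hX.trace_nonneg.lt_of_ne fun h0 => hX0 (hX.trace_eq_zero_iff.mp h0.symm)
  have hWtr : 0 ≤ c * X.trace := by simpa [h] using hW.trace_nonneg
  exact nonneg_of_mul_nonneg_left hWtr hXtr

lemma trace_mul_lineMap {m : Type*} [Fintype m] (N X W : Matrix m m ℝ) (t : ℝ) :
    (N * ((1 - t) • X + t • W)).trace = (1 - t) * (N * X).trace + t * (N * W).trace := by
  simp [Matrix.mul_add, Matrix.trace_add]

lemma IsCompact.eventually_forall_trace_mul_lineMap_pos {m : Type*} [Fintype m]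
    {K : Set (Matrix m m ℝ)} (hK : IsCompact K) {X : Matrix m m ℝ}
    (hX : ∀ N ∈ K, 0 < (N * X).trace) (W : Matrix m m ℝ) :
    ∀ᶠ t in 𝓝 (0 : ℝ), ∀ N ∈ K, 0 < (N * ((1 - t) • X + t • W)).trace := by
  refine hK.eventually_forall_of_forall_eventually fun N hN => ?_
  have hcont : Continuous fun p : ℝ × Matrix m m ℝ =>
      (p.2 * ((1 - p.1) • X + p.1 • W)).trace := by fun_prop
  exact hcont.continuousAt.eventually (lt_mem_nhds (by simpa using hX N hN))

section

variable {n : ℕ}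

lemma IsExtremeRay'.mono {S S' : Set (Matrix (Fin n) (Fin n) ℝ)} {X : Matrix (Fin n) (Fin n) ℝ}
    (hX : IsExtremeRay' S' X) (hSS' : S ⊆ S') (hXS : X ∈ S) : IsExtremeRay' S X :=
  ⟨hXS, hX.2.1, fun Y hY Z hZ h => hX.2.2 Y (hSS' hY) Z (hSS' hZ) h⟩

lemma IsExtremeRay'.of_eventually_lineMap_mem {S S' : Set (Matrix (Fin n) (Fin n) ℝ)}
    {X : Matrix (Fin n) (Fin n) ℝ} (hX : IsExtremeRay' S X) (hXS' : X ∈ S')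
    (hpsd : ∀ W ∈ S', W.PosSemidef)
    (hpull : ∀ W ∈ S', ∀ᶠ t in 𝓝[>] (0 : ℝ), (1 - t) • X + t • W ∈ S) :
    IsExtremeRay' S' X := by
  obtain ⟨hXS, hX0, hext⟩ := hX
  refine ⟨hXS', hX0, fun Y hY Z hZ hXYZ => ?_⟩
  obtain ⟨t, ⟨hYt, hZt⟩, ht⟩ :=
    ((hpull Y hY).and (hpull Z hZ)).and self_mem_nhdsWithin |>.exists
  have hmid : X = (1 / 2 : ℝ) • (((1 - t) • X + t • Y) + ((1 - t) • X + t • Z)) := by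
    have hYZ : Y + Z = (2 : ℝ) • X := by rw [hXYZ]; module
    calc X = (1 / 2 : ℝ) • (((1 - t) • X + (1 - t) • X) + t • (Y + Z)) := by rw [hYZ]; module
      _ = _ := by module
  have hray : ∀ W ∈ S', ∀ α : ℝ, (1 - t) • X + t • W = α • X → ∃ δ : ℝ, 0 ≤ δ ∧ W = δ • X :=
    fun W hW α h => have hWX := eq_smul_of_lineMap_eq_smul (ne_of_gt ht) h
      ⟨_, (hpsd W hW).nonneg_of_eq_smul (hpsd X hXS') hX0 hWX, hWX⟩
  obtain ⟨⟨α, -, hα⟩, ⟨β, -, hβ⟩⟩ := hext _ hYt _ hZt hmid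
  exact ⟨hray Y hY α hα, hray Z hZ β hβ⟩

lemma SCone_anti {𝓜 𝓜' : Set (Matrix (Fin n) (Fin n) ℝ)} (h : 𝓜' ⊆ 𝓜) :
    SCone 𝓜 ⊆ SCone 𝓜' :=
  fun _ hX => ⟨hX.1, fun N hN => hX.2 N (h hN)⟩

lemma TCone_subset_SCone (𝓜 : Set (Matrix (Fin n) (Fin n) ℝ)) : TCone 𝓜 ⊆ SCone 𝓜 :=
  fun _ hX => ⟨hX.1, fun N hN => (hX.2 N hN).ge⟩

lemma eventually_lineMap_mem_SCone {𝓜 𝓜' : Set (Matrix (Fin n) (Fin n) ℝ)}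
    {X W : Matrix (Fin n) (Fin n) ℝ} (hX : X ∈ SCone 𝓜)
    (htight : {N | N ∈ 𝓜 ∧ (N * X).trace = 0} ⊆ 𝓜') (hcomp : IsCompact (𝓜 \ 𝓜'))
    (hW : W ∈ SCone 𝓜') :
    ∀ᶠ t in 𝓝[>] (0 : ℝ), (1 - t) • X + t • W ∈ SCone 𝓜 := by
  have hpos : ∀ N ∈ 𝓜 \ 𝓜', 0 < (N * X).trace := fun N hN =>
    (hX.2 N hN.1).lt_of_ne fun h0 => hN.2 (htight ⟨hN.1, h0.symm⟩)
  filter_upwards [Ioo_mem_nhdsGT one_pos,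
    nhdsWithin_le_nhds (hcomp.eventually_forall_trace_mul_lineMap_pos hpos W)]
    with t ⟨ht0, ht1⟩ hK
  refine ⟨(hX.1.smul (sub_nonneg.mpr ht1.le)).add (hW.1.smul ht0.le), fun N hN => ?_⟩
  by_cases hN' : N ∈ 𝓜'
  · rw [trace_mul_lineMap]
    have hNX := hX.2 N hN
    have hNW := hW.2 N hN'
    have h1t : 0 ≤ 1 - t := sub_nonneg.mpr ht1.le
    positivity
  · exact (hK N ⟨hN, hN'⟩).le

end

theorem stmt_5_general {n : ℕ} (𝓜 𝓜' : Set (Matrix (Fin n) (Fin n) ℝ))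
    (hsub : 𝓜' ⊆ 𝓜)
    (X : Matrix (Fin n) (Fin n) ℝ)
    (hX : IsExtremeRay' (SCone 𝓜) X)
    (htight : {N | N ∈ 𝓜 ∧ (N * X).trace = 0} ⊆ 𝓜')
    (hcomp : IsCompact (𝓜 \ 𝓜')) :
    IsExtremeRay' (SCone 𝓜') X ∧
      (𝓜' = {N | N ∈ 𝓜 ∧ (N * X).trace = 0} → IsExtremeRay' (TCone 𝓜') X) := by
  have hS' : IsExtremeRay' (SCone 𝓜') X :=
    hX.of_eventually_lineMap_mem (SCone_anti hsub hX.1) (fun _ hW => hW.1)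
      fun _ hW => eventually_lineMap_mem_SCone hX.1 htight hcomp hW
  refine ⟨hS', fun heq => hS'.mono (TCone_subset_SCone 𝓜') ⟨hX.1.1, fun N hN => ?_⟩⟩
  rw [heq] at hN
  exact hN.2

theorem stmt_5 {n : ℕ} (𝓜 𝓜' : Set (Matrix (Fin n) (Fin n) ℝ))
    (h𝓜 : ∀ N ∈ 𝓜, N.IsSymm) (hsub : 𝓜' ⊆ 𝓜)
    (X : Matrix (Fin n) (Fin n) ℝ)
    (hX : IsExtremeRay' (SCone 𝓜) X)
    (htight : {N | N ∈ 𝓜 ∧ (N * X).trace = 0} ⊆ 𝓜')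
    (hcomp : IsCompact (𝓜 \ 𝓜')) :
    IsExtremeRay' (SCone 𝓜') X ∧
      (𝓜' = {N | N ∈ 𝓜 ∧ (N * X).trace = 0} → IsExtremeRay' (TCone 𝓜') X) :=
  stmt_5_general 𝓜 𝓜' hsub X hX htight hcomp
end
end

section
/- Let M ⊆ S^n be finite. If T(M') = {X ⪰ 0 : ⟨M,X⟩ = 0 ∀M ∈ M'} is rank-one generated for every subset M' ⊆ M, then S(M) = {X ⪰ 0 : ⟨M,X⟩ ≥ 0 ∀M ∈ M} is rank-one generated. -/
open Matrix Set

noncomputable section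

/-!
Induct on the inequality constraints, through the mixed cones `T(𝓐) ∩ S(𝓑)` with `𝓐, 𝓑 ⊆ 𝓜`.
Let `K` be such a cone and suppose that both `K` and `K ∩ {⟨P, ·⟩ = 0}` are rank-one generated.
A point `X ∈ K` with `⟨P, X⟩ ≥ 0` is a sum `Y + Z`, where `Y` is generated by rank-one members of
`K` on which `⟨P, ·⟩ ≥ 0` and `Z` by those on which `⟨P, ·⟩ ≤ 0`. For a suitable `s ∈ [0, 1]`,
`Z + s Y` lies on the hyperplane `⟨P, ·⟩ = 0`, so it is generated by rank-one members of that
slice, and `X = (Z + s Y) + (1 - s) Y` is generated by rank-one members of `K ∩ {⟨P, ·⟩ ≥ 0}`.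
-/

theorem exists_mem_Icc_add_mul_eq_zero {a b : ℝ} (ha : a ≤ 0) (hab : 0 ≤ a + b) :
    ∃ s ∈ Icc (0 : ℝ) 1, a + s * b = 0 := by
  rcases eq_or_lt_of_le (show 0 ≤ b by linarith) with hb | hb
  · exact ⟨0, left_mem_Icc.mpr zero_le_one, by linarith⟩
  · refine ⟨-a / b, ⟨div_nonneg (by linarith) hb.le, (div_le_one hb).mpr (by linarith)⟩, ?_⟩
    rw [div_mul_cancel₀ _ hb.ne']
    ring

section Conic

variable {E : Type*} [AddCommGroup E] [Module ℝ E]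

def IsConic (S : Set E) : Prop :=
  0 ∈ S ∧ ∀ ⦃c : ℝ⦄, 0 ≤ c → ∀ ⦃x⦄, x ∈ S → c • x ∈ S

theorem IsConic.inter {S T : Set E} (hS : IsConic S) (hT : IsConic T) : IsConic (S ∩ T) :=
  ⟨⟨hS.1, hT.1⟩, fun _ hc _ hx => ⟨hS.2 hc hx.1, hT.2 hc hx.2⟩⟩

theorem IsConic.preimage {F : Type*} [AddCommGroup F] [Module ℝ F] {S : Set F}
    (hS : IsConic S) (f : E →ₗ[ℝ] F) : IsConic (f ⁻¹' S) :=
  ⟨by simpa using hS.1, fun c hc x hx => by simpa using hS.2 hc hx⟩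

theorem isConic_Ici_zero : IsConic (Ici (0 : ℝ)) :=
  ⟨self_mem_Ici, fun _ hc _ hx => mem_Ici.mpr (smul_nonneg hc (mem_Ici.mp hx))⟩

theorem isConic_Iic_zero : IsConic (Iic (0 : ℝ)) :=
  ⟨self_mem_Iic, fun _ hc _ hx => mem_Iic.mpr (smul_nonpos_of_nonneg_of_nonpos hc (mem_Iic.mp hx))⟩

theorem IsConic.smul_mem_convexHull {S : Set E} (hS : IsConic S) {c : ℝ} (hc : 0 ≤ c) {x : E}
    (hx : x ∈ convexHull ℝ S) : c • x ∈ convexHull ℝ S := by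
  have hx' : c • x ∈ (c • LinearMap.id : E →ₗ[ℝ] E) '' convexHull ℝ S := ⟨x, hx, rfl⟩
  rw [LinearMap.image_convexHull] at hx'
  exact convexHull_mono (by rintro _ ⟨y, hy, rfl⟩; exact hS.2 hc hy) hx'

theorem IsConic.add_mem_convexHull {S : Set E} (hS : IsConic S) {x y : E}
    (hx : x ∈ convexHull ℝ S) (hy : y ∈ convexHull ℝ S) : x + y ∈ convexHull ℝ S := by
  have hmid : (1 / 2 : ℝ) • x + (1 / 2 : ℝ) • y ∈ convexHull ℝ S :=
    convex_convexHull ℝ S hx hy (by norm_num) (by norm_num) (by norm_num)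
  convert hS.smul_mem_convexHull zero_le_two hmid using 1
  simp only [smul_add, smul_smul]
  norm_num

theorem IsConic.exists_add_of_mem_convexHull_union {S T : Set E} (hS : IsConic S)
    (hT : IsConic T) {x : E} (hx : x ∈ convexHull ℝ (S ∪ T)) :
    ∃ y ∈ convexHull ℝ S, ∃ z ∈ convexHull ℝ T, x = y + z := by
  rw [convexHull_union ⟨0, hS.1⟩ ⟨0, hT.1⟩, mem_convexJoin] at hx
  obtain ⟨y, hy, z, hz, u, v, hu, hv, -, rfl⟩ := hx
  exact ⟨u • y, hS.smul_mem_convexHull hu hy, v • z, hT.smul_mem_convexHull hv hz, rfl⟩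

theorem inter_preimage_Ici_subset_convexHull {K R : Set E} (f : E →ₗ[ℝ] ℝ) (hKc : Convex ℝ K)
    (hK : IsConic K) (hR : IsConic R) (hgen : K ⊆ convexHull ℝ (K ∩ R))
    (hker : K ∩ f ⁻¹' {0} ⊆ convexHull ℝ (K ∩ f ⁻¹' {0} ∩ R)) :
    K ∩ f ⁻¹' Ici 0 ⊆ convexHull ℝ (K ∩ f ⁻¹' Ici 0 ∩ R) := by
  rintro X ⟨hXK, hfX⟩
  set G := K ∩ f ⁻¹' Ici 0 ∩ R
  have hG : IsConic G := (hK.inter (isConic_Ici_zero.preimage f)).inter hR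
  have hKR : IsConic (K ∩ R) := hK.inter hR
  set Sp := K ∩ R ∩ f ⁻¹' Ici 0
  set Sm := K ∩ R ∩ f ⁻¹' Iic 0
  have hSp : convexHull ℝ Sp ⊆ convexHull ℝ G :=
    convexHull_mono fun A ⟨⟨hAK, hAR⟩, hfA⟩ => ⟨⟨hAK, hfA⟩, hAR⟩
  have hsplit : K ∩ R = Sp ∪ Sm := by
    rw [← inter_union_distrib_left, ← preimage_union, Ici_union_Iic, preimage_univ, inter_univ]
  have hSpC : IsConic Sp := hKR.inter (isConic_Ici_zero.preimage f)
  obtain ⟨Y, hY, Z, hZ, rfl⟩ := hSpC.exists_add_of_mem_convexHull_union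
    (hKR.inter (isConic_Iic_zero.preimage f)) (hsplit ▸ hgen hXK)
  have hYKR : Y ∈ convexHull ℝ (K ∩ R) := convexHull_mono inter_subset_left hY
  have hZKR : Z ∈ convexHull ℝ (K ∩ R) := convexHull_mono inter_subset_left hZ
  have hfY : 0 ≤ f Y := convexHull_min inter_subset_right ((convex_Ici 0).linear_preimage f) hY
  have hfZ : f Z ≤ 0 := convexHull_min inter_subset_right ((convex_Iic 0).linear_preimage f) hZ
  obtain ⟨s, ⟨hs0, hs1⟩, hs⟩ := exists_mem_Icc_add_mul_eq_zero hfZ (by simpa [add_comm] using hfX)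
  have hWK : Z + s • Y ∈ K := convexHull_min inter_subset_left hKc
    (hKR.add_mem_convexHull hZKR (hKR.smul_mem_convexHull hs0 hYKR))
  have hW : Z + s • Y ∈ convexHull ℝ G := by
    refine convexHull_mono ?_ (hker ⟨hWK, by simpa using hs⟩)
    rintro A ⟨⟨hAK, hfA⟩, hAR⟩
    exact ⟨⟨hAK, (mem_singleton_iff.mp hfA).ge⟩, hAR⟩
  have hX : Y + Z = (Z + s • Y) + (1 - s) • Y := by
    rw [sub_smul, one_smul]
    abel
  rw [hX]
  exact hG.add_mem_convexHull hW (hSp (hSpC.smul_mem_convexHull (by linarith) hY))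

end Conic

section TraceCones

variable {n : ℕ}

def traceForm (N : Matrix (Fin n) (Fin n) ℝ) : Matrix (Fin n) (Fin n) ℝ →ₗ[ℝ] ℝ :=
  (traceLinearMap (Fin n) ℝ ℝ).comp (LinearMap.mulLeft ℝ N)

@[simp]
theorem traceForm_apply (N X : Matrix (Fin n) (Fin n) ℝ) : traceForm N X = (N * X).trace :=
  rfl

def UCone (𝓐 𝓑 : Set (Matrix (Fin n) (Fin n) ℝ)) : Set (Matrix (Fin n) (Fin n) ℝ) :=
  TCone 𝓐 ∩ SCone 𝓑

theorem convex_UCone (𝓐 𝓑 : Set (Matrix (Fin n) (Fin n) ℝ)) : Convex ℝ (UCone 𝓐 𝓑) := by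
  rintro X ⟨⟨hX, hXA⟩, -, hXB⟩ Y ⟨⟨hY, hYA⟩, -, hYB⟩ a b ha hb -
  have hpsd : (a • X + b • Y).PosSemidef := (hX.smul ha).add (hY.smul hb)
  refine ⟨⟨hpsd, fun N hN => ?_⟩, hpsd, fun N hN => ?_⟩
  · simp [mul_add, hXA N hN, hYA N hN]
  · simpa [mul_add] using add_nonneg (mul_nonneg ha (hXB N hN)) (mul_nonneg hb (hYB N hN))

theorem isConic_UCone (𝓐 𝓑 : Set (Matrix (Fin n) (Fin n) ℝ)) : IsConic (UCone 𝓐 𝓑) := by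
  refine ⟨⟨⟨.zero, by simp⟩, .zero, by simp⟩, ?_⟩
  rintro c hc X ⟨⟨hX, hXA⟩, -, hXB⟩
  refine ⟨⟨hX.smul hc, fun N hN => ?_⟩, hX.smul hc, fun N hN => ?_⟩
  · simp [hXA N hN]
  · simpa using mul_nonneg hc (hXB N hN)

theorem isConic_rankOneSet : IsConic (RankOneSet n) := by
  refine ⟨⟨0, by simp⟩, ?_⟩
  rintro c hc _ ⟨x, rfl⟩
  refine ⟨Real.sqrt c • x, ?_⟩
  rw [smul_vecMulVec, vecMulVec_smul, smul_smul, Real.mul_self_sqrt hc]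

theorem UCone_empty_left (𝓑 : Set (Matrix (Fin n) (Fin n) ℝ)) : UCone ∅ 𝓑 = SCone 𝓑 := by
  ext X
  simp [UCone, TCone, SCone]

theorem UCone_empty_right (𝓐 : Set (Matrix (Fin n) (Fin n) ℝ)) : UCone 𝓐 ∅ = TCone 𝓐 := by
  ext X
  simp +contextual [UCone, TCone, SCone]

theorem UCone_insert_right (P : Matrix (Fin n) (Fin n) ℝ) (𝓐 𝓑 : Set (Matrix (Fin n) (Fin n) ℝ)) :
    UCone 𝓐 (insert P 𝓑) = UCone 𝓐 𝓑 ∩ traceForm P ⁻¹' Ici 0 := by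
  ext X
  simp only [UCone, TCone, SCone, forall_mem_insert, mem_inter_iff, mem_ofPred_eq, mem_preimage,
    mem_Ici, traceForm_apply]
  tauto

theorem UCone_inter_preimage_zero (P : Matrix (Fin n) (Fin n) ℝ) (𝓐 𝓑 : Set (Matrix (Fin n) (Fin n) ℝ)) :
    UCone 𝓐 𝓑 ∩ traceForm P ⁻¹' {0} = UCone (insert P 𝓐) 𝓑 := by
  ext X
  simp only [UCone, TCone, SCone, forall_mem_insert, mem_inter_iff, mem_ofPred_eq, mem_preimage,
    mem_singleton_iff, traceForm_apply]
  tauto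

theorem isROG_of_subset {S : Set (Matrix (Fin n) (Fin n) ℝ)} (hS : Convex ℝ S)
    (h : S ⊆ convexHull ℝ (S ∩ RankOneSet n)) : IsROG S :=
  h.antisymm (convexHull_min inter_subset_left hS)

theorem isROG_UCone {𝓜 𝓑 : Set (Matrix (Fin n) (Fin n) ℝ)} (h : ∀ 𝓐 ⊆ 𝓜, IsROG (TCone 𝓐))
    (h𝓑 : 𝓑.Finite) (h𝓑𝓜 : 𝓑 ⊆ 𝓜) : ∀ 𝓐 ⊆ 𝓜, IsROG (UCone 𝓐 𝓑) := by
  induction 𝓑, h𝓑 using Set.Finite.induction_on with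
  | empty => simpa only [UCone_empty_right] using h
  | @insert P 𝓑 _ _ ih =>
    intro 𝓐 h𝓐
    have hP : P ∈ 𝓜 := h𝓑𝓜 (mem_insert P 𝓑)
    have ih := ih ((subset_insert P 𝓑).trans h𝓑𝓜)
    rw [UCone_insert_right]
    refine isROG_of_subset ((convex_UCone 𝓐 𝓑).inter ((convex_Ici 0).linear_preimage _)) ?_
    refine inter_preimage_Ici_subset_convexHull _ (convex_UCone 𝓐 𝓑) (isConic_UCone 𝓐 𝓑)
      isConic_rankOneSet (ih 𝓐 h𝓐).le ?_
    rw [UCone_inter_preimage_zero]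
    exact (ih (insert P 𝓐) (insert_subset hP h𝓐)).le

end TraceCones

theorem stmt_6_general {n : ℕ} (𝓜 : Set (Matrix (Fin n) (Fin n) ℝ)) (hfin : 𝓜.Finite)
    (h : ∀ 𝓜' ⊆ 𝓜, IsROG (TCone 𝓜')) :
    IsROG (SCone 𝓜) := by
  rw [← UCone_empty_left]
  exact isROG_UCone h hfin subset_rfl ∅ (empty_subset 𝓜)

theorem stmt_6 {n : ℕ} (𝓜 : Set (Matrix (Fin n) (Fin n) ℝ)) (hfin : 𝓜.Finite)
    (h𝓜 : ∀ N ∈ 𝓜, N.IsSymm)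
    (h : ∀ 𝓜' ⊆ 𝓜, IsROG (TCone 𝓜')) :
    IsROG (SCone 𝓜) :=
  stmt_6_general 𝓜 hfin h
end
end

section
/- The cone S(M) is rank-one generated if and only if for every nonzero X ∈ S(M) there exists a nonzero vector x in range(X) with |xᵀMx| ≤ ⟨M,X⟩ for all M ∈ M. -/
/-!
If `X = ∑ wᵢ xᵢxᵢᵀ` with every `xᵢxᵢᵀ ∈ S(𝓜)`, a nonzero term `P = wᵢxᵢxᵢᵀ` has both `P` and
`X - P` in the cone `S(𝓜)`. From `X ⪰ P` the vector lies in `range X`, and `⟨N, P⟩ ≥ 0`,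
`⟨N, X - P⟩ ≥ 0` give `|xᵀNx| ≤ ⟨N, X⟩`.

Conversely, by Krein–Milman the compact base `S(𝓜) ∩ {tr = 1}` is the convex hull of its extreme
points, so it suffices that these are rank one. For an extreme point `Y` take `x = Yy` as in the
hypothesis: Cauchy–Schwarz gives `Y ⪰ μxxᵀ` for small `μ > 0`, so `Y ± μxxᵀ ∈ S(𝓜)`, and
extremality forces `xxᵀ` to be a multiple of `Y`.
-/

open Matrix Set

noncomputable section

section Convexity

variable {E : Type*} [AddCommGroup E] [Module ℝ E]

theorem PointedCone.eq_smul_of_mem_extremePoints_slice (C : PointedCone ℝ E) (f : E →ₗ[ℝ] ℝ)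
    (hf : ∀ v ∈ C, 0 ≤ f v) {Y P : E} (hY : Y ∈ extremePoints ℝ ((C : Set E) ∩ {v | f v = 1}))
    (hadd : Y + P ∈ C) (hsub : Y - P ∈ C) : P = f P • Y := by
  obtain ⟨⟨hYC, hY1 : f Y = 1⟩, hext⟩ := hY
  have hfadd := hf _ hadd
  have hfsub := hf _ hsub
  rw [map_add, hY1] at hfadd
  rw [map_sub, hY1] at hfsub
  -- Halving `P` keeps `f (Y ± P / 2) ≥ 1 / 2`, so both can be normalised into the slice.
  set Q : E := (1 / 2 : ℝ) • P with hQ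
  have hQC : Y - Q ∈ C := by
    convert C.add_mem (C.smul_mem (by norm_num : (0 : ℝ) ≤ 1 / 2) hsub)
      (C.smul_mem (by norm_num : (0 : ℝ) ≤ 1 / 2) hYC) using 1
    module
  have hQC' : Y + Q ∈ C := by
    convert C.add_mem (C.smul_mem (by norm_num : (0 : ℝ) ≤ 1 / 2) hadd)
      (C.smul_mem (by norm_num : (0 : ℝ) ≤ 1 / 2) hYC) using 1
    module
  set a := f (Y - Q)
  set b := f (Y + Q)
  have ha : a = 1 - f P / 2 := by simp [a, Q, hY1]; ring
  have hb : b = 1 + f P / 2 := by simp [b, Q, hY1]; ring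
  have ha0 : 0 < a := by linarith
  have hb0 : 0 < b := by linarith
  have hA : a⁻¹ • (Y - Q) ∈ (C : Set E) ∩ {v | f v = 1} :=
    ⟨C.smul_mem (inv_nonneg.2 ha0.le) hQC, by
      simpa only [mem_ofPred_eq, map_smul, smul_eq_mul] using inv_mul_cancel₀ ha0.ne'⟩
  have hB : b⁻¹ • (Y + Q) ∈ (C : Set E) ∩ {v | f v = 1} :=
    ⟨C.smul_mem (inv_nonneg.2 hb0.le) hQC', by
      simpa only [mem_ofPred_eq, map_smul, smul_eq_mul] using inv_mul_cancel₀ hb0.ne'⟩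
  have hseg : Y ∈ openSegment ℝ (a⁻¹ • (Y - Q)) (b⁻¹ • (Y + Q)) := by
    refine ⟨a / 2, b / 2, by positivity, by positivity, by linarith, ?_⟩
    rw [smul_smul, smul_smul, show a / 2 * a⁻¹ = 1 / 2 by field_simp,
      show b / 2 * b⁻¹ = 1 / 2 by field_simp]
    module
  have hYQ : Y - Q = a • Y := (inv_smul_eq_iff₀ ha0.ne').1 (hext hA hB hseg)
  calc P = (2 : ℝ) • (Y - (Y - Q)) := by rw [hQ]; module
    _ = f P • Y := by rw [hYQ, ha]; module

theorem isCompact_convexHull [TopologicalSpace E] [ContinuousAdd E] [ContinuousSMul ℝ E]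
    [FiniteDimensional ℝ E] {s : Set E} (hs : IsCompact s) : IsCompact (convexHull ℝ s) := by
  -- Carathéodory: at most `finrank + 1` points of `s` are needed.
  have hcara : convexHull ℝ s = ⋃ k : Fin (Module.finrank ℝ E + 2),
      (fun p : (Fin k → ℝ) × (Fin k → E) => ∑ i, p.1 i • p.2 i) ''
        (stdSimplex ℝ (Fin k) ×ˢ univ.pi fun _ => s) := by
    refine Subset.antisymm (fun x hx => ?_) (iUnion_subset fun k => ?_)
    · obtain ⟨ι, _, z, w, hzs, hz, hw0, hw1, rfl⟩ := eq_pos_convex_span_of_mem_convexHull hx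
      have hcard : Fintype.card ι < Module.finrank ℝ E + 2 := by
        have := hz.card_le_finrank_succ
        have := Submodule.finrank_le (vectorSpan ℝ (range z))
        omega
      let e := (Fintype.equivFin ι).symm
      refine mem_iUnion.2 ⟨⟨_, hcard⟩, (w ∘ e, z ∘ e),
        ⟨⟨fun i => (hw0 _).le, ?_⟩, fun i _ => hzs ⟨_, rfl⟩⟩, e.sum_comp fun i => w i • z i⟩
      simpa [Function.comp_def] using (e.sum_comp w).trans hw1
    · rintro _ ⟨p, ⟨⟨hp0, hp1⟩, hps⟩, rfl⟩
      exact (convex_convexHull ℝ s).sum_mem (fun i _ => hp0 i) hp1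
        fun i _ => subset_convexHull ℝ s (hps i (mem_univ i))
  rw [hcara]
  exact isCompact_iUnion fun k =>
    ((isCompact_stdSimplex _ _).prod (isCompact_univ_pi fun _ => hs)).image (by fun_prop)

theorem IsCompact.subset_convexHull_of_extremePoints_subset [TopologicalSpace E]
    [IsTopologicalAddGroup E] [ContinuousSMul ℝ E] [T2Space E] [LocallyConvexSpace ℝ E]
    [FiniteDimensional ℝ E] {B K : Set E} (hB : IsCompact B) (hBconv : Convex ℝ B)
    (hK : IsCompact K) (hBK : extremePoints ℝ B ⊆ K) : B ⊆ convexHull ℝ K :=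
  calc B = closure (convexHull ℝ (extremePoints ℝ B)) :=
        (closure_convexHull_extremePoints hB hBconv).symm
    _ ⊆ closure (convexHull ℝ K) := closure_mono (convexHull_mono hBK)
    _ = convexHull ℝ K := (isCompact_convexHull hK).isClosed.closure_eq

end Convexity

namespace Matrix

theorem smul_vecMulVec_self {m : Type*} {c : ℝ} (hc : 0 ≤ c) (x : m → ℝ) :
    c • vecMulVec x x = vecMulVec (√c • x) (√c • x) := by
  rw [smul_vecMulVec, vecMulVec_smul, smul_smul, Real.mul_self_sqrt hc]

variable {m : Type*} [Fintype m]

theorem trace_mul_vecMulVec_self (N : Matrix m m ℝ) (x : m → ℝ) :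
    (N * vecMulVec x x).trace = x ⬝ᵥ N *ᵥ x := by
  rw [mul_vecMulVec, trace_vecMulVec, dotProduct_comm]

theorem dotProduct_vecMulVec_self_mulVec (x z : m → ℝ) :
    z ⬝ᵥ vecMulVec x x *ᵥ z = (x ⬝ᵥ z) ^ 2 := by
  rw [vecMulVec_mulVec, op_smul_eq_smul, dotProduct_smul, smul_eq_mul, dotProduct_comm, sq]

theorem posSemidef_vecMulVec_self (x : m → ℝ) : (vecMulVec x x).PosSemidef := by
  simpa using posSemidef_vecMulVec_self_star x

theorem isClosed_setOf_posSemidef : IsClosed {X : Matrix m m ℝ | X.PosSemidef} := by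
  simp only [posSemidef_iff_dotProduct_mulVec, star_trivial, ofPred_and, ofPred_forall]
  exact (isClosed_eq (by fun_prop) (by fun_prop)).inter
    (isClosed_iInter fun v => isClosed_le continuous_const (by fun_prop))

theorem IsHermitian.exists_mulVec_eq {X : Matrix m m ℝ} (hX : X.IsHermitian) {v : m → ℝ}
    (hv : ∀ z, X *ᵥ z = 0 → v ⬝ᵥ z = 0) : ∃ y, X *ᵥ y = v := by
  classical
  have hv' : WithLp.toLp 2 v ∈ (LinearMap.ker X.toEuclideanLin)ᗮ := by
    intro z hz
    have hz : X *ᵥ z.ofLp = 0 := by simpa using congrArg WithLp.ofLp hz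
    simpa [EuclideanSpace.inner_eq_star_dotProduct] using hv _ hz
  rw [← (isSymmetric_toEuclideanLin_iff.2 hX).orthogonal_range,
    Submodule.orthogonal_orthogonal] at hv'
  obtain ⟨y, hy⟩ := hv'
  exact ⟨y.ofLp, by simpa using congrArg WithLp.ofLp hy⟩

namespace PosSemidef

theorem dotProduct_mulVec_sq_le {X : Matrix m m ℝ} (hX : X.PosSemidef) (u v : m → ℝ) :
    (u ⬝ᵥ X *ᵥ v) ^ 2 ≤ (u ⬝ᵥ X *ᵥ u) * (v ⬝ᵥ X *ᵥ v) := by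
  classical
  open scoped MatrixOrder in
  obtain ⟨B, rfl⟩ := CStarAlgebra.nonneg_iff_eq_star_mul_self.mp hX.nonneg
  have hgram : ∀ a b : m → ℝ, a ⬝ᵥ (star B * B) *ᵥ b = B *ᵥ a ⬝ᵥ B *ᵥ b := by
    intro a b
    rw [← mulVec_mulVec, dotProduct_mulVec, star_eq_conjTranspose, vecMul_conjTranspose]
    simp
  rw [hgram, hgram, hgram]
  simpa only [dotProduct, sq] using Finset.sum_mul_sq_le_sq_mul_sq Finset.univ (B *ᵥ u) (B *ᵥ v)

theorem sq_apply_le {X : Matrix m m ℝ} (hX : X.PosSemidef) (i j : m) :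
    X i j ^ 2 ≤ X i i * X j j := by
  classical
  simpa [dotProduct, mulVec, Pi.single_apply] using
    hX.dotProduct_mulVec_sq_le (Pi.single i 1) (Pi.single j 1)

theorem exists_mulVec_eq_of_posSemidef_sub_vecMulVec {X : Matrix m m ℝ} {x : m → ℝ}
    (h : (X - vecMulVec x x).PosSemidef) : ∃ y, X *ᵥ y = x := by
  have hX : X.IsHermitian := by
    simpa using h.isHermitian.add (posSemidef_vecMulVec_self x).isHermitian
  refine hX.exists_mulVec_eq fun z hz => ?_
  have := h.dotProduct_mulVec_nonneg z
  rw [star_trivial, sub_mulVec, dotProduct_sub, hz, dotProduct_zero,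
    dotProduct_vecMulVec_self_mulVec] at this
  nlinarith [sq_nonneg (x ⬝ᵥ z)]

theorem posSemidef_sub_smul_vecMulVec_mulVec {Y : Matrix m m ℝ} (hY : Y.PosSemidef)
    (y : m → ℝ) {μ : ℝ} (hμ : 0 ≤ μ) (hμy : μ * (y ⬝ᵥ Y *ᵥ y) ≤ 1) :
    (Y - μ • vecMulVec (Y *ᵥ y) (Y *ᵥ y)).PosSemidef := by
  refine .of_dotProduct_mulVec_nonneg
    (hY.isHermitian.sub ((posSemidef_vecMulVec_self _).smul hμ).isHermitian) fun z => ?_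
  rw [star_trivial, sub_mulVec, dotProduct_sub, smul_mulVec, dotProduct_smul, smul_eq_mul,
    dotProduct_vecMulVec_self_mulVec, dotProduct_comm (Y *ᵥ y)]
  have hzz : 0 ≤ z ⬝ᵥ Y *ᵥ z := by simpa using hY.dotProduct_mulVec_nonneg z
  have hcs := hY.dotProduct_mulVec_sq_le z y
  nlinarith [mul_le_mul_of_nonneg_left hcs hμ, mul_le_mul_of_nonneg_left hμy hzz]

end PosSemidef

instance instLocallyConvexSpace {𝕜 R m n : Type*} [Semiring 𝕜] [PartialOrder 𝕜]
    [AddCommMonoid R] [Module 𝕜 R] [TopologicalSpace R] [LocallyConvexSpace 𝕜 R] :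
    LocallyConvexSpace 𝕜 (Matrix m n R) :=
  inferInstanceAs (LocallyConvexSpace 𝕜 (m → n → R))

end Matrix

section SCone

variable {n : ℕ} {𝓜 : Set (Matrix (Fin n) (Fin n) ℝ)}

def SCone.toPointedCone (𝓜 : Set (Matrix (Fin n) (Fin n) ℝ)) :
    PointedCone ℝ (Matrix (Fin n) (Fin n) ℝ) where
  carrier := SCone 𝓜
  add_mem' hX hY := ⟨hX.1.add hY.1, fun N hN => by
    rw [Matrix.mul_add, trace_add]
    exact add_nonneg (hX.2 N hN) (hY.2 N hN)⟩
  zero_mem' := ⟨.zero, fun N _ => by simp⟩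
  smul_mem' c X hX := by
    change (c : ℝ) • X ∈ SCone 𝓜
    refine ⟨hX.1.smul c.2, fun N hN => ?_⟩
    rw [Matrix.mul_smul, trace_smul, smul_eq_mul]
    exact mul_nonneg c.2 (hX.2 N hN)

theorem isClosed_sCone : IsClosed (SCone 𝓜) := by
  have : SCone 𝓜 = {X | X.PosSemidef} ∩ ⋂ N ∈ 𝓜, {X | 0 ≤ (N * X).trace} := by
    ext X
    simp [SCone]
  rw [this]
  exact isClosed_setOf_posSemidef.inter
    (isClosed_biInter fun N _ => isClosed_le continuous_const (by fun_prop))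

theorem add_mem_sCone_of_abs_trace_le {Y P : Matrix (Fin n) (Fin n) ℝ}
    (hYP : (Y + P).PosSemidef) (hP : ∀ N ∈ 𝓜, |(N * P).trace| ≤ (N * Y).trace) :
    Y + P ∈ SCone 𝓜 :=
  ⟨hYP, fun N hN => by
    rw [Matrix.mul_add, trace_add]
    linarith [neg_abs_le (N * P).trace, hP N hN]⟩

theorem exists_vecMulVec_le_of_mem_convexHull {X : Matrix (Fin n) (Fin n) ℝ}
    (hX : X ∈ convexHull ℝ (SCone 𝓜 ∩ RankOneSet n)) (hX0 : X ≠ 0) :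
    ∃ x : Fin n → ℝ, x ≠ 0 ∧ vecMulVec x x ∈ SCone 𝓜 ∧ X - vecMulVec x x ∈ SCone 𝓜 := by
  classical
  let C := SCone.toPointedCone 𝓜
  obtain ⟨ι, _, w, z, hw0, -, hz, rfl⟩ := mem_convexHull_iff_exists_fintype.1 hX
  obtain ⟨i, hi⟩ : ∃ i, w i • z i ≠ 0 := by
    by_contra! h
    exact hX0 (Fintype.sum_eq_zero _ h)
  obtain ⟨v, hv⟩ := (hz i).2
  have hwz : w i • z i = vecMulVec (√(w i) • v) (√(w i) • v) := by
    rw [← smul_vecMulVec_self (hw0 i), hv]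
  refine ⟨√(w i) • v, fun h => hi (by simp [hwz, h]), ?_, ?_⟩
  · rw [← hwz]
    exact C.smul_mem (hw0 i) (hz i).1
  · rw [← hwz, ← Finset.sum_erase_add _ _ (Finset.mem_univ i), add_sub_cancel_right]
    exact Submodule.sum_mem C fun j _ => C.smul_mem (hw0 j) (hz j).1

theorem abs_dotProduct_mulVec_le_trace_mul {X : Matrix (Fin n) (Fin n) ℝ} {x : Fin n → ℝ}
    (hx : vecMulVec x x ∈ SCone 𝓜) (hXx : X - vecMulVec x x ∈ SCone 𝓜) :
    ∀ N ∈ 𝓜, |x ⬝ᵥ N *ᵥ x| ≤ (N * X).trace := fun N hN => by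
  have h1 := hx.2 N hN
  have h2 := hXx.2 N hN
  rw [trace_mul_vecMulVec_self] at h1
  rw [Matrix.mul_sub, trace_sub, trace_mul_vecMulVec_self] at h2
  rw [abs_of_nonneg h1]
  linarith

theorem mem_rankOneSet_of_mem_extremePoints
    (hcond : ∀ X ∈ SCone 𝓜, X ≠ 0 →
      ∃ x : Fin n → ℝ, x ≠ 0 ∧ (∃ y : Fin n → ℝ, X.mulVec y = x) ∧
        ∀ N ∈ 𝓜, |x ⬝ᵥ N.mulVec x| ≤ (N * X).trace)
    {Y : Matrix (Fin n) (Fin n) ℝ} (hY : Y ∈ extremePoints ℝ (SCone 𝓜 ∩ {X | X.trace = 1})) :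
    Y ∈ RankOneSet n := by
  have hYS : Y ∈ SCone 𝓜 := hY.1.1
  have hY0 : Y ≠ 0 := fun h => by simpa [h] using hY.1.2
  obtain ⟨_, hx0, ⟨y, rfl⟩, hxN⟩ := hcond Y hYS hY0
  set x := Y *ᵥ y
  have hc : 0 < y ⬝ᵥ Y *ᵥ y := (by simpa using hYS.1.dotProduct_mulVec_nonneg y : (0 : ℝ) ≤ _)
    |>.lt_of_ne fun h => hx0 ((hYS.1.dotProduct_mulVec_zero_iff y).1 (by simpa using h.symm))
  -- `μ ≤ 1 / yᵀYy` keeps `Y - μ xxᵀ` semidefinite, `μ ≤ 1` keeps `Y ± μ xxᵀ` in the cone.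
  set μ := min (y ⬝ᵥ Y *ᵥ y)⁻¹ 1
  have hμ : 0 < μ := lt_min (inv_pos.2 hc) one_pos
  set P := μ • vecMulVec x x
  have hPpsd : P.PosSemidef := (posSemidef_vecMulVec_self x).smul hμ.le
  have hPN : ∀ N ∈ 𝓜, |(N * P).trace| ≤ (N * Y).trace := fun N hN => by
    rw [Matrix.mul_smul, trace_smul, trace_mul_vecMulVec_self, smul_eq_mul, abs_mul, abs_of_pos hμ]
    exact (mul_le_of_le_one_left (abs_nonneg _) (min_le_right _ _)).trans (hxN N hN)
  have hadd : Y + P ∈ SCone 𝓜 := add_mem_sCone_of_abs_trace_le (hYS.1.add hPpsd) hPN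
  have hsub : Y - P ∈ SCone 𝓜 := by
    have hpsd := hYS.1.posSemidef_sub_smul_vecMulVec_mulVec y hμ.le
      ((mul_le_mul_of_nonneg_right (min_le_left _ _) hc.le).trans_eq (inv_mul_cancel₀ hc.ne'))
    rw [sub_eq_add_neg] at hpsd ⊢
    exact add_mem_sCone_of_abs_trace_le hpsd (by simpa using hPN)
  have hYP : P = P.trace • Y := (SCone.toPointedCone 𝓜).eq_smul_of_mem_extremePoints_slice
    (traceLinearMap _ ℝ ℝ) (fun X hX => hX.1.trace_nonneg) hY hadd hsub
  have htr : P.trace ≠ 0 := fun h => hx0 <| by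
    simpa [P, hμ.ne', h] using hYP
  refine ⟨√(P.trace⁻¹ * μ) • x, ?_⟩
  rw [← smul_vecMulVec_self (mul_nonneg (inv_nonneg.2 hPpsd.trace_nonneg) hμ.le), mul_smul]
  exact ((inv_smul_eq_iff₀ htr).2 hYP).symm

theorem isClosed_sCone_inter_trace_eq_one : IsClosed (SCone 𝓜 ∩ {X | X.trace = 1}) :=
  isClosed_sCone.inter (isClosed_eq (by fun_prop) continuous_const)

theorem isCompact_sCone_inter_trace_eq_one : IsCompact (SCone 𝓜 ∩ {X | X.trace = 1}) := by
  refine (isCompact_univ_pi fun _ => isCompact_univ_pi fun _ =>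
    isCompact_Icc (a := -1) (b := 1)).of_isClosed_subset
    isClosed_sCone_inter_trace_eq_one fun W hW i _ j _ => ?_
  have hdiag : ∀ k, W k k ≤ 1 := fun k => hW.2 ▸
    Finset.single_le_sum (f := fun l => W l l) (fun l _ => hW.1.1.diag_nonneg) (Finset.mem_univ k)
  have hij := hW.1.1.sq_apply_le i j
  have hiijj := mul_le_one₀ (hdiag i) hW.1.1.diag_nonneg (hdiag j)
  exact abs_le.1 (sq_le_one_iff_abs_le_one _ |>.1 (by linarith))

theorem isCompact_sCone_inter_trace_eq_one_inter_rankOneSet :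
    IsCompact (SCone 𝓜 ∩ {X | X.trace = 1} ∩ RankOneSet n) := by
  let f : (Fin n → ℝ) → Matrix (Fin n) (Fin n) ℝ := fun v => vecMulVec v v
  have hf : Continuous f := by fun_prop
  have hrange : RankOneSet n = range f := by
    ext X
    simp [RankOneSet, f, eq_comm]
  rw [hrange, ← image_preimage_eq_inter_range]
  refine IsCompact.image ?_ hf
  refine (isCompact_univ_pi fun _ => isCompact_Icc (a := -1) (b := 1)).of_isClosed_subset
    (isClosed_sCone_inter_trace_eq_one.preimage hf) fun v hv i _ => ?_
  have hv1 : ∑ k, v k * v k = 1 := by simpa [f, trace_vecMulVec, dotProduct] using hv.2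
  have hvi := Finset.single_le_sum (fun k _ => mul_self_nonneg (v k)) (Finset.mem_univ i)
  exact abs_le.1 ((abs_le_one_iff_mul_self_le_one).2 (hv1 ▸ hvi))

theorem isROG_sCone
    (hcond : ∀ X ∈ SCone 𝓜, X ≠ 0 →
      ∃ x : Fin n → ℝ, x ≠ 0 ∧ (∃ y : Fin n → ℝ, X.mulVec y = x) ∧
        ∀ N ∈ 𝓜, |x ⬝ᵥ N.mulVec x| ≤ (N * X).trace) :
    IsROG (SCone 𝓜) := by
  let C := SCone.toPointedCone 𝓜
  refine (convexHull_min inter_subset_left C.convex).antisymm' fun X hX => ?_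
  have hbase : SCone 𝓜 ∩ {X | X.trace = 1} ⊆ convexHull ℝ (SCone 𝓜 ∩ RankOneSet n) :=
    (isCompact_sCone_inter_trace_eq_one.subset_convexHull_of_extremePoints_subset
      (C.convex.inter (convex_hyperplane (traceLinearMap _ ℝ ℝ).isLinear 1))
      isCompact_sCone_inter_trace_eq_one_inter_rankOneSet
      fun Y hY => ⟨hY.1, mem_rankOneSet_of_mem_extremePoints hcond hY⟩).trans
    (convexHull_mono fun Y hY => ⟨hY.1.1, hY.2⟩)
  by_cases hX0 : X = 0
  · exact subset_convexHull ℝ _ ⟨hX0 ▸ hX, 0, by simp [hX0]⟩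
  have ht : 0 < X.trace := hX.1.trace_nonneg.lt_of_ne (Ne.symm (hX.1.trace_eq_zero_iff.not.2 hX0))
  have hscaled := smul_mem_smul_set (a := X.trace)
    (hbase ⟨C.smul_mem (inv_nonneg.2 ht.le) hX, by simp [ht.ne']⟩)
  rw [smul_inv_smul₀ ht.ne', ← convexHull_smul] at hscaled
  refine convexHull_mono ?_ hscaled
  rintro _ ⟨Y, ⟨hYS, v, rfl⟩, rfl⟩
  exact ⟨C.smul_mem ht.le hYS, _, smul_vecMulVec_self ht.le v⟩

end SCone

theorem stmt_7_general {n : ℕ} (𝓜 : Set (Matrix (Fin n) (Fin n) ℝ)) :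
    IsROG (SCone 𝓜) ↔
      ∀ X ∈ SCone 𝓜, X ≠ 0 →
        ∃ x : Fin n → ℝ, x ≠ 0 ∧ (∃ y : Fin n → ℝ, X.mulVec y = x) ∧
          ∀ N ∈ 𝓜, |x ⬝ᵥ N.mulVec x| ≤ (N * X).trace := by
  refine ⟨fun h X hX hX0 => ?_, isROG_sCone⟩
  obtain ⟨x, hx0, hx, hXx⟩ := exists_vecMulVec_le_of_mem_convexHull (h ▸ hX) hX0
  exact ⟨x, hx0, hXx.1.exists_mulVec_eq_of_posSemidef_sub_vecMulVec,
    abs_dotProduct_mulVec_le_trace_mul hx hXx⟩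

theorem stmt_7 {n : ℕ} (𝓜 : Set (Matrix (Fin n) (Fin n) ℝ)) (h𝓜 : ∀ N ∈ 𝓜, N.IsSymm) :
    IsROG (SCone 𝓜) ↔
      ∀ X ∈ SCone 𝓜, X ≠ 0 →
        ∃ x : Fin n → ℝ, x ≠ 0 ∧ (∃ y : Fin n → ℝ, X.mulVec y = x) ∧
          ∀ N ∈ 𝓜, |x ⬝ᵥ N.mulVec x| ≤ (N * X).trace :=
  stmt_7_general 𝓜
end
end

section
/- For any single symmetric matrix M ∈ S^n, the cone S({M}) = {X ⪰ 0 : ⟨M,X⟩ ≥ 0} is rank-one generated. -/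
/-!
Write `X ⪰ 0` as `∑ xᵢ xᵢᵀ`. If `⟨M, X⟩ ≥ 0` but some `⟨M, y yᵀ⟩ < 0`, then some other
`⟨M, x xᵀ⟩ > 0`; rotating the pair `(x, y)` in its plane preserves `x xᵀ + y yᵀ`, and by the
intermediate value theorem some rotated vector `u` has `⟨M, u uᵀ⟩ = 0`. Splitting off `u uᵀ` and
recursing on the remaining vectors (Sturm's argument) writes `X` as a sum of rank-one matrices of
`S({M})`. That set is closed under nonnegative scaling, so its convex hull is a convex cone and
contains every such sum.
-/

open Matrix Set

noncomputable section

theorem Matrix.vecMulVec_rotate_add {α : Type*} [CommRing α] {m : Type*} {c s : α}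
    (h : c ^ 2 + s ^ 2 = 1) (x y : m → α) :
    vecMulVec (c • x + s • y) (c • x + s • y) + vecMulVec (-s • x + c • y) (-s • x + c • y) =
      vecMulVec x x + vecMulVec y y := by
  ext a b
  simp only [Matrix.add_apply, vecMulVec_apply, Pi.add_apply, Pi.smul_apply, smul_eq_mul]
  linear_combination (x a * x b + y a * y b) * h

section Sturm

variable {n : Type*} [Fintype n]

theorem Matrix.exists_vecMulVec_add_eq_of_trace_mul_pos_of_neg (M : Matrix n n ℝ)
    {x y : n → ℝ} (hx : 0 < (M * vecMulVec x x).trace) (hy : (M * vecMulVec y y).trace < 0) :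
    ∃ u w : n → ℝ, (M * vecMulVec u u).trace = 0 ∧
      vecMulVec u u + vecMulVec w w = vecMulVec x x + vecMulVec y y := by
  let f : ℝ → ℝ := fun θ ↦
    (M * vecMulVec (Real.cos θ • x + Real.sin θ • y) (Real.cos θ • x + Real.sin θ • y)).trace
  obtain ⟨θ, -, hθ⟩ := intermediate_value_Icc' (f := f) Real.pi_div_two_pos.le
    (by fun_prop : Continuous f).continuousOn
    ⟨by simpa [f] using hy.le, by simpa [f] using hx.le⟩
  exact ⟨_, _, hθ, vecMulVec_rotate_add (Real.cos_sq_add_sin_sq θ) x y⟩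

theorem Matrix.exists_sum_vecMulVec_eq_of_trace_mul_nonneg (M : Matrix n n ℝ)
    (S : Multiset (n → ℝ)) (hS : 0 ≤ (M * (S.map fun v ↦ vecMulVec v v).sum).trace) :
    ∃ T : Multiset (n → ℝ),
      (T.map fun v ↦ vecMulVec v v).sum = (S.map fun v ↦ vecMulVec v v).sum ∧
        ∀ v ∈ T, 0 ≤ (M * vecMulVec v v).trace := by
  induction hk : Multiset.card S generalizing S with
  | zero => exact ⟨S, rfl, by simp [Multiset.card_eq_zero.mp hk]⟩
  | succ k ih =>
    by_cases hall : ∀ v ∈ S, 0 ≤ (M * vecMulVec v v).trace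
    · exact ⟨S, rfl, hall⟩
    push Not at hall
    obtain ⟨y, hyS, hy⟩ := hall
    obtain ⟨x, hxS, hx⟩ : ∃ x ∈ S.erase y, 0 < (M * vecMulVec x x).trace := by
      by_contra! hnonpos
      have hrest : (M * ((S.erase y).map fun v ↦ vecMulVec v v).sum).trace ≤ 0 :=
        Multiset.sum_induction (fun X ↦ (M * X).trace ≤ 0) _
          (fun A B hA hB ↦ by rw [mul_add, trace_add]; linarith) (by simp)
          (by simpa using hnonpos)
      rw [← Multiset.cons_erase hyS, Multiset.map_cons, Multiset.sum_cons, mul_add,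
        trace_add] at hS
      linarith
    obtain ⟨u, w, hu, huw⟩ := exists_vecMulVec_add_eq_of_trace_mul_pos_of_neg M hx hy
    have hsum : vecMulVec u u + ((w ::ₘ (S.erase y).erase x).map fun v ↦ vecMulVec v v).sum =
        (S.map fun v ↦ vecMulVec v v).sum := by
      conv_rhs => rw [← Multiset.cons_erase hyS, ← Multiset.cons_erase hxS]
      simp only [Multiset.map_cons, Multiset.sum_cons]
      rw [← add_assoc, huw]
      abel
    obtain ⟨T, hT, hTnn⟩ := ih (w ::ₘ (S.erase y).erase x)
      (by rwa [← hsum, mul_add, trace_add, hu, zero_add] at hS)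
      (by have := Multiset.card_erase_add_one hxS; have := Multiset.card_erase_add_one hyS
          rw [Multiset.card_cons]; omega)
    refine ⟨u ::ₘ T, by rw [Multiset.map_cons, Multiset.sum_cons, hT, hsum], ?_⟩
    simpa [hu] using hTnn

end Sturm

open scoped Pointwise in
theorem add_mem_convexHull_of_smul_mem {E : Type*} [AddCommMonoid E] [Module ℝ E] {C : Set E}
    (hC : ∀ c : ℝ, 0 ≤ c → ∀ x ∈ C, c • x ∈ C) {x y : E} (hx : x ∈ convexHull ℝ C)
    (hy : y ∈ convexHull ℝ C) : x + y ∈ convexHull ℝ C := by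
  have hmid : (1 / 2 : ℝ) • x + (1 / 2 : ℝ) • y ∈ convexHull ℝ C :=
    convex_convexHull ℝ C hx hy (by norm_num) (by norm_num) (by norm_num)
  have hdouble : (2 : ℝ) • convexHull ℝ C ⊆ convexHull ℝ C := by
    rw [← convexHull_smul]
    exact convexHull_mono (Set.smul_set_subset_iff.mpr fun z hz ↦ hC 2 zero_le_two z hz)
  convert hdouble (Set.smul_mem_smul_set hmid) using 1
  module

theorem multiset_sum_mem_convexHull_of_smul_mem {E : Type*} [AddCommMonoid E] [Module ℝ E]
    {C : Set E} (h0 : (0 : E) ∈ C) (hC : ∀ c : ℝ, 0 ≤ c → ∀ x ∈ C, c • x ∈ C) (T : Multiset E)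
    (hT : ∀ x ∈ T, x ∈ C) : T.sum ∈ convexHull ℝ C :=
  Multiset.sum_induction _ T (fun _ _ ↦ add_mem_convexHull_of_smul_mem hC)
    (subset_convexHull ℝ C h0) fun x hx ↦ subset_convexHull ℝ C (hT x hx)

section Cones

variable {n : ℕ}

theorem convex_SCone (𝓜 : Set (Matrix (Fin n) (Fin n) ℝ)) : Convex ℝ (SCone 𝓜) := by
  intro X hX Y hY a b ha hb _
  refine ⟨(hX.1.smul ha).add (hY.1.smul hb), fun N hN ↦ ?_⟩
  rw [mul_add, trace_add, mul_smul_comm, mul_smul_comm, trace_smul, trace_smul]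
  exact add_nonneg (smul_nonneg ha (hX.2 N hN)) (smul_nonneg hb (hY.2 N hN))

theorem smul_mem_SCone {𝓜 : Set (Matrix (Fin n) (Fin n) ℝ)} {c : ℝ} (hc : 0 ≤ c)
    {X : Matrix (Fin n) (Fin n) ℝ} (hX : X ∈ SCone 𝓜) : c • X ∈ SCone 𝓜 := by
  refine ⟨hX.1.smul hc, fun N hN ↦ ?_⟩
  rw [mul_smul_comm, trace_smul]
  exact smul_nonneg hc (hX.2 N hN)

theorem smul_mem_rankOneSet {c : ℝ} (hc : 0 ≤ c) {X : Matrix (Fin n) (Fin n) ℝ}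
    (hX : X ∈ RankOneSet n) : c • X ∈ RankOneSet n := by
  obtain ⟨x, rfl⟩ := hX
  refine ⟨√c • x, ?_⟩
  rw [smul_vecMulVec, vecMulVec_smul, smul_smul, Real.mul_self_sqrt hc]

end Cones

theorem stmt_9_general {n : ℕ} (M : Matrix (Fin n) (Fin n) ℝ) :
    IsROG (SCone {M}) := by
  refine (convexHull_min Set.inter_subset_left (convex_SCone {M})).antisymm' fun X hX ↦ ?_
  obtain ⟨m, v, hXv⟩ := posSemidef_iff_eq_sum_vecMulVec.mp hX.1
  have hXS : X = ((Finset.univ.val.map v).map fun x ↦ vecMulVec x x).sum := by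
    simp only [hXv, star_trivial, Multiset.map_map]
    rfl
  obtain ⟨T, hT, hTnn⟩ :=
    exists_sum_vecMulVec_eq_of_trace_mul_nonneg M _ (hXS ▸ hX.2 M rfl)
  rw [hXS, ← hT]
  refine multiset_sum_mem_convexHull_of_smul_mem (C := SCone {M} ∩ RankOneSet n)
    ⟨⟨PosSemidef.zero, by simp⟩, 0, by simp⟩
    (fun c hc X hX ↦ ⟨smul_mem_SCone hc hX.1, smul_mem_rankOneSet hc hX.2⟩) _ ?_
  simp only [Multiset.mem_map]
  rintro _ ⟨x, hx, rfl⟩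
  exact ⟨⟨by simpa using posSemidef_vecMulVec_self_star x, by simpa using hTnn x hx⟩, x, rfl⟩

theorem stmt_9 {n : ℕ} (M : Matrix (Fin n) (Fin n) ℝ) (hM : M.IsSymm) :
    IsROG (SCone {M}) :=
  stmt_9_general M
end
end
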